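/- arXiv:1907.08447 — 2 statements merged into one kernel-verified Lean document; each statement's English description precedes it below -/
import Mathlib

section
/- Let G be a distance-regular graph with odd girth g = 2h+1. Then every edge of G lies in exactly p²q cycles of length 2h+1, where p = c_h c_{h-1} ⋯ c_1 and q > 0 is the number of vertices at distance h from both endpoints of an edge (independent of the edge). Consequently G admits a homogeneous fractional decomposition into copies of C_{2h+1} with all weights equal to 1/(p²q). -/
set_option linter.unusedSectionVars false

noncomputable def oddGirth {V : Type*} (G : SimpleGraph V) : ℕ :=
  sInf {n | Odd n ∧ ∃ (v : V) (c : G.Walk v v), c.IsCycle ∧ c.length = n}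

def IsDistanceRegular {V : Type*} (G : SimpleGraph V) : Prop :=
  G.Connected ∧ ∀ (i j : ℕ) (u v u' v' : V), G.dist u v = G.dist u' v' →
    ({w : V | G.dist u w = i ∧ G.dist v w = j}).ncard =
    ({w : V | G.dist u' w = i ∧ G.dist v' w = j}).ncard

/-- The set of (2h+1)-cycles of `G`, each represented by its edge set. -/
def cycleEdgeSets {V : Type*} [DecidableEq V] (G : SimpleGraph V) (n : ℕ) :
    Set (Finset (Sym2 V)) :=
  {s | ∃ (v : V) (c : G.Walk v v), c.IsCycle ∧ c.length = n ∧ c.edges.toFinset = s}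


open SimpleGraph Finset

namespace CycDecomp

variable {V : Type*} {G : SimpleGraph V}

/-- Split a walk at position `i`. -/
lemma exists_split {u v : V} (p : G.Walk u v) (i : ℕ) (hi : i ≤ p.length) :
    ∃ (z : V) (q : G.Walk u z) (r : G.Walk z v), p = q.append r ∧ q.length = i := by
  induction i generalizing u p with
  | zero => exact ⟨u, .nil, p, rfl, rfl⟩
  | succ n ih =>
    cases p with
    | nil => simp at hi
    | cons h t =>
      obtain ⟨z, q, r, rfl, hq⟩ := ih t (by simpa using hi)
      exact ⟨z, .cons h q, r, rfl, by simp [hq]⟩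

/-- Appending is injective when left lengths agree. -/
lemma append_inj : ∀ (n : ℕ) {a c b b' : V} (P : G.Walk a b) (P' : G.Walk a b')
    (R : G.Walk b c) (R' : G.Walk b' c), P.length = n → P'.length = n →
    P.append R = P'.append R' → b = b' ∧ HEq P P' ∧ HEq R R' := by
  intro n
  induction n with
  | zero =>
    intro a c b b' P P' R R' hP hP'
    cases P with
    | cons h t => simp at hP
    | nil =>
      cases P' with
      | cons h t => simp at hP'
      | nil => intro hh; exact ⟨rfl, HEq.rfl, heq_of_eq hh⟩
  | succ n ih =>
    intro a c b b' P P' R R' hP hP'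
    cases P with
    | nil => simp at hP
    | cons h t =>
      cases P' with
      | nil => simp at hP'
      | cons h' t' =>
        intro hh
        simp only [SimpleGraph.Walk.cons_append] at hh
        injection hh with h1 h2 h3 h4
        subst h2
        obtain ⟨rfl, hh2, hh3⟩ := ih t t' R R' (by simpa using hP) (by simpa using hP') (eq_of_heq h4)
        exact ⟨rfl, by rw [eq_of_heq hh2], hh3⟩

end CycDecomp

namespace CycDecomp

open SimpleGraph Finset

variable {V : Type*} {G : SimpleGraph V}

/-- Any two edges of a path containing the start vertex are equal. -/
lemma head_edge_unique {u v : V} (p : G.Walk u v) (hp : p.IsPath) {e f : Sym2 V}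
    (he : e ∈ p.edges) (hf : f ∈ p.edges) (hue : u ∈ e) (huf : u ∈ f) : e = f := by
  cases p with
  | nil => simp at he
  | @cons _ z _ h t =>
    rw [SimpleGraph.Walk.cons_isPath_iff] at hp
    have key : ∀ g : Sym2 V, g ∈ (SimpleGraph.Walk.cons h t).edges → u ∈ g → g = s(u, z) := by
      intro g hg hug
      obtain ⟨o, rfl⟩ := Sym2.mem_iff_exists.mp hug
      rw [SimpleGraph.Walk.edges_cons] at hg
      rcases List.mem_cons.mp hg with hg1 | hg2
      · exact hg1
      · exact absurd (t.fst_mem_support_of_mem_edges hg2) hp.2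
    rw [key e he hue, key f hf huf]

variable [DecidableEq V]

/-- A path is determined by its endpoints and its set of edges. -/
lemma path_eq_of_edges_toFinset_eq : ∀ {u v : V} (p q : G.Walk u v), p.IsPath → q.IsPath →
    p.edges.toFinset = q.edges.toFinset → p = q := by
  intro u v p
  induction p with
  | nil =>
    intro q _ _ hpq
    have h0 : q.edges = [] := by
      have := hpq.symm
      simp only [SimpleGraph.Walk.edges_nil, List.toFinset_nil] at this
      exact List.toFinset_eq_empty_iff _ |>.mp this
    have hlen : q.length = 0 := by
      have := congrArg List.length h0
      simpa [SimpleGraph.Walk.length_edges] using this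
    exact (SimpleGraph.Walk.nil_iff_eq_nil.mp (SimpleGraph.Walk.length_eq_zero_iff.mp hlen)).symm
  | @cons a z b h t ih =>
    intro q hp hq hpq
    cases q with
    | nil =>
      exfalso
      have hm : s(a, z) ∈ (SimpleGraph.Walk.cons h t).edges.toFinset := by simp
      rw [hpq] at hm
      simp at hm
    | @cons _ z' _ h' t' =>
      rw [SimpleGraph.Walk.cons_isPath_iff] at hp hq
      have hmem : s(a, z) ∈ (SimpleGraph.Walk.cons h' t').edges := by
        rw [← List.mem_toFinset, ← hpq]; simp
      have hz : z = z' := by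
        rw [SimpleGraph.Walk.edges_cons] at hmem
        rcases List.mem_cons.mp hmem with h1 | h2
        · exact (Sym2.congr_right.mp h1)
        · exact absurd (t'.fst_mem_support_of_mem_edges h2) hq.2
      subst hz
      have hnp : s(a, z) ∉ t.edges := fun hmem' =>
        hp.2 (t.fst_mem_support_of_mem_edges hmem')
      have hnq : s(a, z) ∉ t'.edges := fun hmem' =>
        hq.2 (t'.fst_mem_support_of_mem_edges hmem')
      have hte : t.edges.toFinset = t'.edges.toFinset := by
        have h1 : insert s(a, z) t.edges.toFinset = insert s(a, z) t'.edges.toFinset := by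
          simpa using hpq
        have h2 := congrArg (Finset.erase · s(a, z)) h1
        simp only [Finset.erase_insert_eq_erase] at h2
        rwa [Finset.erase_eq_self.mpr (by simpa using hnp),
          Finset.erase_eq_self.mpr (by simpa using hnq)] at h2
      rw [ih t' hp.1 hq.1 hte]

end CycDecomp

namespace CycDecomp

open SimpleGraph Finset

variable {V : Type*} {G : SimpleGraph V} [DecidableEq V]

/-- An edge of a (cons-)path containing the start vertex is the first edge. -/
lemma eq_head_edge {a b z : V} {h : G.Adj a z} {t : G.Walk z b}
    (hp : (SimpleGraph.Walk.cons h t).IsPath) {e : Sym2 V}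
    (he : e ∈ (SimpleGraph.Walk.cons h t).edges) (hae : a ∈ e) : e = s(a, z) := by
  rw [SimpleGraph.Walk.cons_isPath_iff] at hp
  obtain ⟨o, rfl⟩ := Sym2.mem_iff_exists.mp hae
  rw [SimpleGraph.Walk.edges_cons] at he
  rcases List.mem_cons.mp he with hg1 | hg2
  · exact hg1
  · exact absurd (t.fst_mem_support_of_mem_edges hg2) hp.2

lemma length_rotate' {v z : V} (p : G.Walk v v) (hz : z ∈ p.support) :
    (p.rotate _ hz).length = p.length := by
  simp only [SimpleGraph.Walk.rotate, SimpleGraph.Walk.length_append]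
  have := congrArg SimpleGraph.Walk.length (p.take_spec hz)
  rw [SimpleGraph.Walk.length_append] at this
  omega

/-- Any closed walk of odd length contains an odd cycle of at most its length. -/
lemma exists_odd_cycle_of_odd_closed_walk :
    ∀ (n : ℕ) {v : V} (p : G.Walk v v), p.length = n → Odd n →
    ∃ (u : V) (q : G.Walk u u), q.IsCycle ∧ Odd q.length ∧ q.length ≤ n := by
  intro n
  induction n using Nat.strong_induction_on with
  | _ n ih =>
    intro v p hlen hodd
    by_cases hnd : p.support.tail.Nodup
    · -- `p` is itself a cycle
      cases p with
      | nil =>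
        exfalso
        rw [← hlen] at hodd
        simp [Nat.odd_iff] at hodd
      | @cons _ z _ hadj t =>
        have htp : t.IsPath := SimpleGraph.Walk.IsPath.mk' (by simpa using hnd)
        have hne : s(v, z) ∉ t.edges := by
          intro hmem
          have hrevmem : s(v, z) ∈ t.reverse.edges := by
            rw [SimpleGraph.Walk.edges_reverse, List.mem_reverse]; exact hmem
          have hnn : ¬ t.reverse.Nil := by
            rw [SimpleGraph.Walk.not_nil_iff_lt_length, SimpleGraph.Walk.length_reverse]
            by_contra hc
            push_neg at hc
            interval_cases ht : t.length
            · exact absurd (SimpleGraph.Walk.eq_of_length_eq_zero ht) hadj.ne'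
          obtain ⟨z₂, hadj₂, r, hrep⟩ := SimpleGraph.Walk.not_nil_iff.mp hnn
          rw [hrep] at hrevmem
          have heq : s(v, z) = s(v, z₂) :=
            eq_head_edge (hrep ▸ htp.reverse) hrevmem (by simp)
          have hz2 : z = z₂ := Sym2.congr_right.mp heq
          subst hz2
          have : r = SimpleGraph.Walk.nil :=
            SimpleGraph.Walk.isPath_iff_eq_nil (p := r) |>.mp
              (SimpleGraph.Walk.IsPath.of_cons (hrep ▸ htp.reverse))
          rw [this] at hrep
          have h2 : t.length = 1 := by
            have := congrArg SimpleGraph.Walk.length hrep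
            simpa [SimpleGraph.Walk.length_reverse] using this
          rw [← hlen] at hodd
          simp [h2, Nat.odd_iff] at hodd
        have hcyc : (SimpleGraph.Walk.cons hadj t).IsCycle :=
          (SimpleGraph.Walk.cons_isCycle_iff t hadj).mpr ⟨htp, hne⟩
        exact ⟨v, _, hcyc, hlen ▸ hodd, le_of_eq hlen⟩
    · -- split at a repeated vertex
      obtain ⟨z, hdup⟩ := List.exists_duplicate_iff_not_nodup.mpr hnd
      classical
      have hcount : 2 ≤ p.support.tail.count z := List.duplicate_iff_two_le_count.mp hdup
      have hzsup : z ∈ p.support := by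
        rw [p.support_eq_cons]
        exact List.mem_cons_of_mem _ (List.count_pos_iff.mp (by omega))
      set p' := p.rotate z hzsup with hp'
      have hlen' : p'.length = n := by rw [hp', length_rotate' p hzsup, hlen]
      have hcount' : 2 ≤ p'.support.tail.count z :=
        (((p.support_rotate z hzsup).perm.count_eq z) ▸ hcount : _)
      have hnn : ¬ p'.Nil := by
        rw [SimpleGraph.Walk.not_nil_iff_lt_length, hlen']
        rcases hodd with ⟨k, hk⟩; omega
      obtain ⟨x, hadj, t, hrep⟩ := SimpleGraph.Walk.not_nil_iff.mp hnn
      have hcountt : 2 ≤ t.support.count z := by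
        rw [hrep] at hcount'
        simpa using hcount'
      have hzt : z ∈ t.support := List.count_pos_iff.mp (by omega)
      set t1 := t.takeUntil z hzt with ht1
      set t2 := t.dropUntil z hzt with ht2
      have hsplit : t = t1.append t2 := (t.take_spec hzt).symm
      have hlensum : t1.length + t2.length = t.length := by
        have := congrArg SimpleGraph.Walk.length hsplit
        rw [SimpleGraph.Walk.length_append] at this
        omega
      have htlen : t.length + 1 = n := by
        have := congrArg SimpleGraph.Walk.length hrep
        rw [hlen'] at this
        simp only [SimpleGraph.Walk.length_cons] at this
        omega
      have hc1 : t1.support.count z = 1 := t.count_support_takeUntil_eq_one hzt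
      have ht2pos : 1 ≤ t2.length := by
        by_contra hc
        push_neg at hc
        have ht2nil : t2.length = 0 := by omega
        have htail : t2.support.tail = [] := by
          have hls := t2.length_support
          rw [ht2nil] at hls
          cases hts : t2.support with
          | nil => simp
          | cons a l => rw [hts] at hls; simp at hls; simp [hls]
        have hkey : List.count z t.support
            = List.count z t1.support + List.count z t2.support.tail := by
          conv_lhs => rw [hsplit]
          rw [SimpleGraph.Walk.support_append, List.count_append]
        rw [hkey, hc1, htail, List.count_nil] at hcountt
        omega
      have hw1 : (SimpleGraph.Walk.cons hadj t1).length + t2.length = n := by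
        simp only [SimpleGraph.Walk.length_cons]
        omega
      rcases Nat.even_or_odd t2.length with he2 | ho2
      · -- first part odd
        have hodd1 : Odd (SimpleGraph.Walk.cons hadj t1).length := by
          rcases hodd with ⟨k, hk⟩
          rcases he2 with ⟨m, hm⟩
          rw [Nat.odd_iff]
          omega
        obtain ⟨u, q, hq1, hq2, hq3⟩ := ih (SimpleGraph.Walk.cons hadj t1).length
          (by omega) (SimpleGraph.Walk.cons hadj t1) rfl hodd1
        exact ⟨u, q, hq1, hq2, by omega⟩
      · -- second part odd
        obtain ⟨u, q, hq1, hq2, hq3⟩ := ih t2.length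
          (by simp only [SimpleGraph.Walk.length_cons] at hw1; omega) t2 rfl ho2
        exact ⟨u, q, hq1, hq2, by omega⟩

end CycDecomp

namespace CycDecomp

open SimpleGraph Finset

variable {V : Type*} {G : SimpleGraph V} [DecidableEq V]

/-- Prefix/suffix of a geodesic are geodesics. -/
lemma dist_split (hconn : G.Connected) {u v z : V} (p : G.Walk u v)
    (hp : p.length = G.dist u v) (hz : z ∈ p.support) :
    G.dist u z = (p.takeUntil z hz).length ∧ G.dist z v = (p.dropUntil z hz).length := by
  have h1 : G.dist u z ≤ (p.takeUntil z hz).length := SimpleGraph.dist_le _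
  have h2 : G.dist z v ≤ (p.dropUntil z hz).length := SimpleGraph.dist_le _
  have h3 : (p.takeUntil z hz).length + (p.dropUntil z hz).length = p.length := by
    have := congrArg SimpleGraph.Walk.length (p.take_spec hz)
    rw [SimpleGraph.Walk.length_append] at this
    omega
  have h4 : G.dist u v ≤ G.dist u z + G.dist z v := hconn.dist_triangle
  omega

variable [Fintype V] [DecidableRel G.Adj]

lemma card_walkLength_eq_adjMatrix_pow (n : ℕ) (u v : V) :
    (G.adjMatrix ℕ ^ n) u v = (G.finsetWalkLength n u v).card := by
  rw [SimpleGraph.adjMatrix_pow_apply_eq_card_walk, SimpleGraph.card_set_walk_length_eq]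
  simp

/-- The number of geodesics in a distance-regular-like situation. -/
lemma geoCount (hconn : G.Connected) (c : ℕ → ℕ) (h : ℕ)
    (hc : ∀ i, 1 ≤ i → i ≤ h → ∀ v w : V, G.dist v w = i →
      ({u : V | G.Adj w u ∧ G.dist v u = i - 1}).ncard = c i) :
    ∀ i, i ≤ h → ∀ u w : V, G.dist u w = i →
      (G.finsetWalkLength i u w).card = ∏ j ∈ Finset.Icc 1 i, c j := by
  classical
  intro i
  induction i with
  | zero =>
    intro _ u w hd
    have huw : u = w := (hconn.dist_eq_zero_iff).mp hd
    subst huw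
    rw [← card_walkLength_eq_adjMatrix_pow]
    simp
  | succ i ih =>
    intro hih u w hd
    rw [← card_walkLength_eq_adjMatrix_pow, pow_succ', SimpleGraph.adjMatrix_mul_apply]
    have hsum : ∀ y ∈ G.neighborFinset u,
        (G.adjMatrix ℕ ^ i) y w = if G.dist y w = i then ∏ j ∈ Finset.Icc 1 i, c j else 0 := by
      intro y hy
      rw [SimpleGraph.mem_neighborFinset] at hy
      by_cases hdy : G.dist y w = i
      · rw [if_pos hdy, card_walkLength_eq_adjMatrix_pow, ih (by omega) y w hdy]
      · rw [if_neg hdy, card_walkLength_eq_adjMatrix_pow]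
        rw [Finset.card_eq_zero, Finset.eq_empty_iff_forall_notMem]
        intro P hP
        rw [SimpleGraph.mem_finsetWalkLength_iff] at hP
        have h1 : G.dist y w ≤ i := hP ▸ SimpleGraph.dist_le P
        have h2 : G.dist u w ≤ G.dist u y + G.dist y w := hconn.dist_triangle
        have h3 : G.dist u y ≤ 1 := by
          rw [SimpleGraph.dist_eq_one_iff_adj.mpr hy]
        omega
    rw [Finset.sum_congr rfl hsum, ← Finset.sum_filter]
    rw [Finset.sum_const, smul_eq_mul]
    have hset := hc (i+1) (by omega) hih w u (by rw [SimpleGraph.dist_comm]; exact hd)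
    have hseteq : {u' : V | G.Adj u u' ∧ G.dist w u' = (i+1) - 1}
        = ↑((G.neighborFinset u).filter (fun y => G.dist y w = i)) := by
      ext y
      simp only [Set.mem_setOf_eq, Finset.coe_filter, SimpleGraph.mem_neighborFinset,
        Nat.add_sub_cancel]
      rw [SimpleGraph.dist_comm]
    rw [hseteq, Set.ncard_coe_finset] at hset
    rw [hset, Finset.prod_Icc_succ_top (by omega : 1 ≤ i + 1)]
    ring

end CycDecomp

namespace CycDecomp

open SimpleGraph Finset

variable {V : Type*} {G : SimpleGraph V} [DecidableEq V]

/-- Two geodesics from the ends of an edge to a common vertex at equal distance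
only meet at that vertex (assuming odd girth bound `hbig`). -/
lemma geo_meet (hconn : G.Connected) {h : ℕ} (hh : 1 ≤ h)
    (hbig : ∀ (u : V) (p : G.Walk u u), Odd p.length → 2 * h + 1 ≤ p.length)
    {x y w : V} (hxy : G.Adj x y) (hxw : G.dist x w = h) (hyw : G.dist y w = h)
    (P : G.Walk x w) (Q : G.Walk y w) (hP : P.length = h) (hQ : Q.length = h)
    {z : V} (hzP : z ∈ P.support) (hzQ : z ∈ Q.support) : z = w := by
  have hPd : P.length = G.dist x w := by rw [hP, hxw]
  have hQd : Q.length = G.dist y w := by rw [hQ, hyw]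
  obtain ⟨ha1, ha2⟩ := dist_split hconn P hPd hzP
  obtain ⟨hb1, hb2⟩ := dist_split hconn Q hQd hzQ
  -- lengths
  have hsum1 : (P.takeUntil z hzP).length + (P.dropUntil z hzP).length = h := by
    have := congrArg SimpleGraph.Walk.length (P.take_spec hzP)
    rw [SimpleGraph.Walk.length_append] at this
    omega
  have hsum2 : (Q.takeUntil z hzQ).length + (Q.dropUntil z hzQ).length = h := by
    have := congrArg SimpleGraph.Walk.length (Q.take_spec hzQ)
    rw [SimpleGraph.Walk.length_append] at this
    omega
  by_contra hzw
  have hdzw : 1 ≤ G.dist z w := by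
    rcases Nat.eq_zero_or_pos (G.dist z w) with h0 | h1
    · exact absurd ((hconn.dist_eq_zero_iff).mp h0) hzw
    · omega
  -- closed odd walk x → z → y → x
  set K := (P.takeUntil z hzP).append ((Q.takeUntil z hzQ).reverse.append
      (SimpleGraph.Walk.cons hxy.symm SimpleGraph.Walk.nil)) with hK
  have hKlen : K.length = (P.takeUntil z hzP).length + ((Q.takeUntil z hzQ).length + 1) := by
    simp [hK, SimpleGraph.Walk.length_append, SimpleGraph.Walk.length_reverse]
  have hab : (P.takeUntil z hzP).length = (Q.takeUntil z hzQ).length := by omega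
  have hKodd : Odd K.length := by
    rw [hKlen, ← hab]
    exact ⟨(P.takeUntil z hzP).length, by ring⟩
  have := hbig x K hKodd
  omega

/-- The concatenation of two geodesics with the closing edge is a cycle. -/
lemma triple_path (hconn : G.Connected) {h : ℕ} (hh : 1 ≤ h)
    (hbig : ∀ (u : V) (p : G.Walk u u), Odd p.length → 2 * h + 1 ≤ p.length)
    {x y w : V} (hxy : G.Adj x y) (hxw : G.dist x w = h) (hyw : G.dist y w = h)
    (P : G.Walk x w) (Q : G.Walk y w) (hP : P.length = h) (hQ : Q.length = h) :
    (P.append Q.reverse).IsPath ∧ s(x, y) ∉ (P.append Q.reverse).edges := by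
  have hPp : P.IsPath := P.isPath_of_length_eq_dist (by rw [hP, hxw])
  have hQp : Q.IsPath := Q.isPath_of_length_eq_dist (by rw [hQ, hyw])
  have hxw' : x ≠ w := fun hc => by rw [hc] at hxw; simp [SimpleGraph.dist_self] at hxw; omega
  have hyw' : y ≠ w := fun hc => by rw [hc] at hyw; simp [SimpleGraph.dist_self] at hyw; omega
  have hmeet := fun z hzP hzQ =>
    geo_meet hconn hh hbig hxy hxw hyw P Q hP hQ (z := z) hzP hzQ
  have hrevsup : Q.reverse.support = w :: Q.reverse.support.tail :=
    Q.reverse.support_eq_cons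
  have hwnotin : w ∉ Q.reverse.support.tail := by
    have : Q.reverse.support.Nodup := hQp.reverse.support_nodup
    rw [hrevsup] at this
    exact (List.nodup_cons.mp this).1
  constructor
  · apply SimpleGraph.Walk.IsPath.mk'
    rw [SimpleGraph.Walk.support_append, List.nodup_append]
    refine ⟨hPp.support_nodup, (List.tail_sublist _).nodup hQp.reverse.support_nodup, ?_⟩
    intro z hz1 _ hz2 rfl
    have hz2' : z ∈ Q.support := by
      have : z ∈ Q.reverse.support := List.mem_of_mem_tail hz2
      rwa [SimpleGraph.Walk.support_reverse, List.mem_reverse] at this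
    have := hmeet z hz1 hz2'
    subst this
    exact hwnotin hz2
  · intro hmem
    rw [SimpleGraph.Walk.edges_append, List.mem_append] at hmem
    rcases hmem with hm | hm
    · have hy : y ∈ P.support := P.snd_mem_support_of_mem_edges hm
      exact hyw' (hmeet y hy Q.start_mem_support)
    · rw [SimpleGraph.Walk.edges_reverse, List.mem_reverse] at hm
      have hx : x ∈ Q.support := Q.fst_mem_support_of_mem_edges hm
      exact hxw' (hmeet x P.start_mem_support hx)

/-- The midpoint of the long path opposite an edge of an odd-girth cycle is
at distance `h` from both endpoints of the edge. -/
lemma mid_dist (hconn : G.Connected) {h : ℕ} (hh : 1 ≤ h)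
    (hbig : ∀ (u : V) (p : G.Walk u u), Odd p.length → 2 * h + 1 ≤ p.length)
    {x y z : V} (hxy : G.Adj x y) (P : G.Walk x z) (R : G.Walk z y)
    (hP : P.length = h) (hR : R.length = h) :
    G.dist x z = h ∧ G.dist y z = h := by
  have hd1le : G.dist x z ≤ h := hP ▸ SimpleGraph.dist_le P
  have hd2le : G.dist y z ≤ h := by
    have := SimpleGraph.dist_le R
    rw [hR] at this
    rwa [SimpleGraph.dist_comm]
  obtain ⟨g1, hg1⟩ := (SimpleGraph.Walk.reachable P).exists_walk_length_eq_dist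
  obtain ⟨g2, hg2⟩ := (SimpleGraph.Walk.reachable R.reverse).exists_walk_length_eq_dist
  -- g1 : Walk x z with length = dist x z; g2 : Walk y z with length = dist y z
  have heven1 : ¬ Odd (G.dist x z + h) := by
    intro hodd
    have := hbig x (g1.append P.reverse)
      (by rwa [SimpleGraph.Walk.length_append, SimpleGraph.Walk.length_reverse, hg1, hP])
    rw [SimpleGraph.Walk.length_append, SimpleGraph.Walk.length_reverse, hg1, hP] at this
    omega
  have heven2 : ¬ Odd (G.dist y z + h) := by
    intro hodd
    have := hbig y (g2.append R)
      (by rwa [SimpleGraph.Walk.length_append, hg2, hR])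
    rw [SimpleGraph.Walk.length_append, hg2, hR] at this
    omega
  have hodd1 : Odd ((g1.append (R.append (SimpleGraph.Walk.cons hxy.symm
      SimpleGraph.Walk.nil))).length) := by
    simp only [SimpleGraph.Walk.length_append, SimpleGraph.Walk.length_cons,
      SimpleGraph.Walk.length_nil, hg1, hR]
    have : G.dist x z + (h + (0 + 1)) = (G.dist x z + h) + 1 := by ring
    rw [this, Nat.odd_add_one]
    exact fun hodd => heven1 hodd
  have hodd2 : Odd ((g2.append (P.reverse.append (SimpleGraph.Walk.cons hxy
      SimpleGraph.Walk.nil))).length) := by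
    simp only [SimpleGraph.Walk.length_append, SimpleGraph.Walk.length_cons,
      SimpleGraph.Walk.length_nil, SimpleGraph.Walk.length_reverse, hg2, hP]
    have : G.dist y z + (h + (0 + 1)) = (G.dist y z + h) + 1 := by ring
    rw [this, Nat.odd_add_one]
    exact fun hodd => heven2 hodd
  have hb1 := hbig x _ hodd1
  have hb2 := hbig y _ hodd2
  simp only [SimpleGraph.Walk.length_append, SimpleGraph.Walk.length_cons,
    SimpleGraph.Walk.length_nil, SimpleGraph.Walk.length_reverse, hg1, hg2, hP, hR] at hb1 hb2
  omega

end CycDecomp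

namespace CycDecomp

open SimpleGraph Finset

variable {V : Type*} {G : SimpleGraph V} [DecidableEq V]

/-- Any cycle through the edge `s(x,y)` is obtained from a path from `x` to `y`
avoiding that edge by adding the edge. -/
lemma cycle_split {x y v : V} (hxy : G.Adj x y) (c : G.Walk v v) (hc : c.IsCycle)
    (he : s(x, y) ∈ c.edges) :
    ∃ D : G.Walk x y, D.IsPath ∧ D.length + 1 = c.length ∧ s(x, y) ∉ D.edges ∧
      insert s(x, y) D.edges.toFinset = c.edges.toFinset := by
  have hxsup : x ∈ c.support := c.fst_mem_support_of_mem_edges he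
  set c' := c.rotate x hxsup with hc'def
  have hrot : c'.edges ~r c.edges := c.rotate_edges x hxsup
  have hfin : c'.edges.toFinset = c.edges.toFinset := List.toFinset_eq_of_perm _ _ hrot.perm
  have hc'cyc : c'.IsCycle := hc.rotate hxsup
  have hc'len : c'.length = c.length := length_rotate' c hxsup
  have he' : s(x, y) ∈ c'.edges := hrot.perm.mem_iff.mpr he
  obtain ⟨z, hadj, t, hrep⟩ := SimpleGraph.Walk.not_nil_iff.mp hc'cyc.not_nil
  have hcyc2 : (SimpleGraph.Walk.cons hadj t).IsCycle := hrep ▸ hc'cyc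
  obtain ⟨htpath, hnte⟩ := (SimpleGraph.Walk.cons_isCycle_iff t hadj).mp hcyc2
  have hlen2 : t.length + 1 = c.length := by
    have := congrArg SimpleGraph.Walk.length hrep
    rw [hc'len] at this
    simp only [SimpleGraph.Walk.length_cons] at this
    omega
  rw [hrep] at he'
  rw [SimpleGraph.Walk.edges_cons] at he'
  have hfin2 : c.edges.toFinset = insert s(x, z) t.edges.toFinset := by
    rw [← hfin, hrep]
    simp
  rcases List.mem_cons.mp he' with h1 | h2
  · -- the edge is the first edge of the rotated cycle: y = z
    have hyz : y = z := Sym2.congr_right.mp h1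
    subst hyz
    refine ⟨t.reverse, htpath.reverse, ?_, ?_, ?_⟩
    · rwa [SimpleGraph.Walk.length_reverse]
    · rw [SimpleGraph.Walk.edges_reverse, List.mem_reverse]
      exact hnte
    · rw [SimpleGraph.Walk.edges_reverse, List.toFinset_reverse, hfin2]
  · -- the edge is the last edge of the rotated cycle
    have htrev_nn : ¬ t.reverse.Nil := by
      rw [SimpleGraph.Walk.not_nil_iff_lt_length, SimpleGraph.Walk.length_reverse]
      have h3 := hc.three_le_length
      omega
    obtain ⟨z', hadj', r, hrep'⟩ := SimpleGraph.Walk.not_nil_iff.mp htrev_nn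
    have hrevpath : (SimpleGraph.Walk.cons hadj' r).IsPath := hrep' ▸ htpath.reverse
    have hfirst : s(x, y) = s(x, z') := by
      apply eq_head_edge hrevpath _ (by simp)
      rw [← hrep', SimpleGraph.Walk.edges_reverse, List.mem_reverse]
      exact h2
    have hyz' : y = z' := Sym2.congr_right.mp hfirst
    subst hyz'
    -- now t.reverse = cons (x~y) r with r : Walk y z
    have hxyne : s(x, y) ≠ s(x, z) := fun hcon => hnte (hcon ▸ h2)
    have hredges : t.edges.toFinset = insert s(x, y) r.edges.toFinset := by
      have : t.edges.toFinset = t.reverse.edges.toFinset := by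
        rw [SimpleGraph.Walk.edges_reverse, List.toFinset_reverse]
      rw [this, hrep']
      simp
    have hrnotin : s(x, y) ∉ r.edges := by
      have : (SimpleGraph.Walk.cons hadj' r).edges.Nodup := hrevpath.isTrail.edges_nodup
      rw [SimpleGraph.Walk.edges_cons] at this
      exact (List.nodup_cons.mp this).1
    have hxnr : x ∉ r.support := (SimpleGraph.Walk.cons_isPath_iff hadj' r).mp hrevpath |>.2
    refine ⟨SimpleGraph.Walk.cons hadj r.reverse, ?_, ?_, ?_, ?_⟩
    · apply SimpleGraph.Walk.IsPath.cons
      · exact ((SimpleGraph.Walk.cons_isPath_iff hadj' r).mp hrevpath).1.reverse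
      · rwa [SimpleGraph.Walk.support_reverse, List.mem_reverse]
    · have hrlen : r.length + 1 = t.length := by
        have := congrArg SimpleGraph.Walk.length hrep'
        rw [SimpleGraph.Walk.length_reverse] at this
        simp only [SimpleGraph.Walk.length_cons] at this
        omega
      simp only [SimpleGraph.Walk.length_cons, SimpleGraph.Walk.length_reverse]
      omega
    · intro hmem
      rw [SimpleGraph.Walk.edges_cons] at hmem
      rcases List.mem_cons.mp hmem with hm1 | hm2
      · exact hxyne hm1
      · rw [SimpleGraph.Walk.edges_reverse, List.mem_reverse] at hm2
        exact hrnotin hm2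
    · rw [hfin2, hredges]
      simp only [SimpleGraph.Walk.edges_cons, List.toFinset_cons,
        SimpleGraph.Walk.edges_reverse, List.toFinset_reverse]
      exact Finset.insert_comm _ _ _

/-- A vertex on a cycle is on exactly two of its edges. -/
lemma cycle_vertex_edges {u w : V} (c : G.Walk u u) (hc : c.IsCycle)
    (hws : ∃ e ∈ c.edges, w ∈ e) :
    (c.edges.toFinset.filter (fun e => w ∈ e)).card = 2 := by
  obtain ⟨e₀, he₀, hwe₀⟩ := hws
  obtain ⟨o, rfl⟩ := Sym2.mem_iff_exists.mp hwe₀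
  have hwsup : w ∈ c.support := c.fst_mem_support_of_mem_edges he₀
  set c₂ := c.rotate w hwsup with hc₂def
  have hrot : c₂.edges ~r c.edges := c.rotate_edges w hwsup
  have hfin : c₂.edges.toFinset = c.edges.toFinset := List.toFinset_eq_of_perm _ _ hrot.perm
  have hc₂cyc : c₂.IsCycle := hc.rotate hwsup
  have hc₂len : c₂.length = c.length := length_rotate' c hwsup
  obtain ⟨z, hadj, t, hrep⟩ := SimpleGraph.Walk.not_nil_iff.mp hc₂cyc.not_nil
  have hcyc2 : (SimpleGraph.Walk.cons hadj t).IsCycle := hrep ▸ hc₂cyc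
  obtain ⟨htpath, hnte⟩ := (SimpleGraph.Walk.cons_isCycle_iff t hadj).mp hcyc2
  have htrev_nn : ¬ t.reverse.Nil := by
    rw [SimpleGraph.Walk.not_nil_iff_lt_length, SimpleGraph.Walk.length_reverse]
    have h3 := hc.three_le_length
    have := congrArg SimpleGraph.Walk.length hrep
    simp only [SimpleGraph.Walk.length_cons] at this
    omega
  obtain ⟨z', hadj', r, hrep'⟩ := SimpleGraph.Walk.not_nil_iff.mp htrev_nn
  have hrevpath : (SimpleGraph.Walk.cons hadj' r).IsPath := hrep' ▸ htpath.reverse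
  have hlast_mem : s(w, z') ∈ t.edges := by
    rw [← List.mem_reverse, ← SimpleGraph.Walk.edges_reverse, hrep']
    simp
  have hne : s(w, z) ≠ s(w, z') := by
    intro hcon
    exact hnte (hcon ▸ hlast_mem)
  have hset : c₂.edges.toFinset.filter (fun e => w ∈ e) = {s(w, z), s(w, z')} := by
    ext e
    simp only [Finset.mem_filter, List.mem_toFinset, Finset.mem_insert, Finset.mem_singleton]
    constructor
    · rintro ⟨hmem, hwe⟩
      rw [hrep, SimpleGraph.Walk.edges_cons] at hmem
      rcases List.mem_cons.mp hmem with hm1 | hm2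
      · exact Or.inl hm1
      · refine Or.inr ?_
        apply eq_head_edge hrevpath _ hwe
        rw [← hrep', SimpleGraph.Walk.edges_reverse, List.mem_reverse]
        exact hm2
    · rintro (rfl | rfl)
      · exact ⟨by rw [hrep]; simp, by simp⟩
      · refine ⟨?_, by simp⟩
        rw [hrep, SimpleGraph.Walk.edges_cons]
        exact List.mem_cons_of_mem _ hlast_mem
  rw [← hfin, hset]
  rw [Finset.card_insert_of_notMem (by simpa using hne), Finset.card_singleton]

end CycDecomp

theorem distanceRegular_cycle_decomposition {V : Type*} [Fintype V] [DecidableEq V]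
    (G : SimpleGraph V) [DecidableRel G.Adj] (h : ℕ) (hh : 1 ≤ h)
    (hdr : IsDistanceRegular G) (hg : oddGirth G = 2 * h + 1)
    (c : ℕ → ℕ)
    (hc : ∀ i, 1 ≤ i → i ≤ h → ∀ v w : V, G.dist v w = i →
      ({u : V | G.Adj w u ∧ G.dist v u = i - 1}).ncard = c i)
    (q : ℕ) (hq : 0 < q)
    (hq' : ∀ x y : V, G.Adj x y →
      ({w : V | G.dist x w = h ∧ G.dist y w = h}).ncard = q) :
    (∀ e ∈ G.edgeSet,
        ({s ∈ cycleEdgeSets G (2 * h + 1) | e ∈ s}).ncard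
          = (∏ i ∈ Finset.Icc 1 h, c i) ^ 2 * q) ∧
    (∀ e ∈ G.edgeSet,
        (({s ∈ cycleEdgeSets G (2 * h + 1) | e ∈ s}).ncard : ℝ)
          * (1 / (((∏ i ∈ Finset.Icc 1 h, c i) ^ 2 * q : ℕ) : ℝ)) = 1) ∧
    (∃ m : ℕ, ∀ v : V,
        ({s ∈ cycleEdgeSets G (2 * h + 1) | ∃ e ∈ s, v ∈ e}).ncard = m) := by
  classical
  obtain ⟨hconn, hreg⟩ := hdr
  -- lower bound on lengths of odd closed walks, from the odd girth hypothesis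
  have hbig : ∀ (u : V) (p : G.Walk u u), Odd p.length → 2 * h + 1 ≤ p.length := by
    intro u p hodd
    obtain ⟨w, qc, hq1, hq2, hq3⟩ :=
      CycDecomp.exists_odd_cycle_of_odd_closed_walk (G := G) p.length p rfl hodd
    have hmem : qc.length ∈
        {n | Odd n ∧ ∃ (v : V) (c : G.Walk v v), c.IsCycle ∧ c.length = n} :=
      ⟨hq2, w, qc, hq1, rfl⟩
    have hle := Nat.sInf_le hmem
    rw [show sInf {n | Odd n ∧ ∃ (v : V) (c : G.Walk v v), c.IsCycle ∧ c.length = n}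
      = oddGirth G from rfl, hg] at hle
    omega
  have hgeo := CycDecomp.geoCount hconn c h hc
  set p : ℕ := ∏ i ∈ Finset.Icc 1 h, c i with hpdef
  set N : ℕ := p ^ 2 * q with hNdef
  -- the key count
  have key : ∀ x y : V, G.Adj x y →
      ({s ∈ cycleEdgeSets G (2 * h + 1) | s(x, y) ∈ s}).ncard = N := by
    intro x y hxy
    set Wfin : Finset V := Set.toFinset {w : V | G.dist x w = h ∧ G.dist y w = h} with hWdef
    have hWcard : Wfin.card = q := by
      rw [← hq' x y hxy, ← Set.ncard_coe_finset Wfin, hWdef, Set.coe_toFinset]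
    have hWmem : ∀ w : V, w ∈ Wfin ↔ (G.dist x w = h ∧ G.dist y w = h) := by
      intro w; rw [hWdef, Set.mem_toFinset]; rfl
    set Tfin := Wfin.sigma
      (fun w => (G.finsetWalkLength h x w) ×ˢ (G.finsetWalkLength h y w)) with hTdef
    have hTmem : ∀ a : (w : V) × (G.Walk x w × G.Walk y w), a ∈ Tfin ↔
        ((G.dist x a.1 = h ∧ G.dist y a.1 = h) ∧ a.2.1.length = h ∧ a.2.2.length = h) := by
      rintro ⟨w, P, Q⟩
      rw [hTdef, Finset.mem_sigma, Finset.mem_product, hWmem,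
        SimpleGraph.mem_finsetWalkLength_iff, SimpleGraph.mem_finsetWalkLength_iff]
    have hSconv : {s ∈ cycleEdgeSets G (2 * h + 1) | s(x, y) ∈ s}
        = ↑((Set.toFinset (cycleEdgeSets G (2 * h + 1))).filter (fun s => s(x, y) ∈ s)) := by
      ext s
      simp [Set.mem_toFinset]
    -- main bijection
    have hbij : ((Set.toFinset (cycleEdgeSets G (2 * h + 1))).filter
        (fun s => s(x, y) ∈ s)).card = Tfin.card := by
      symm
      apply Finset.card_bij
        (fun a _ => insert s(x, y) ((a.2.1.append a.2.2.reverse).edges.toFinset))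
      · -- maps into
        rintro ⟨w, P, Q⟩ ha
        obtain ⟨⟨hd1, hd2⟩, hP, hQ⟩ := (hTmem _).mp ha
        obtain ⟨hDpath, hDnot⟩ :=
          CycDecomp.triple_path hconn hh hbig hxy hd1 hd2 P Q hP hQ
        have hcyc : (SimpleGraph.Walk.cons hxy.symm (P.append Q.reverse)).IsCycle := by
          rw [SimpleGraph.Walk.cons_isCycle_iff]
          exact ⟨hDpath, by rwa [Sym2.eq_swap]⟩
        rw [Finset.mem_filter]
        constructor
        · rw [Set.mem_toFinset]
          refine ⟨y, SimpleGraph.Walk.cons hxy.symm (P.append Q.reverse), hcyc, ?_, ?_⟩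
          · simp [SimpleGraph.Walk.length_append, SimpleGraph.Walk.length_reverse, hP, hQ]
            omega
          · rw [SimpleGraph.Walk.edges_cons, List.toFinset_cons, Sym2.eq_swap]
        · exact Finset.mem_insert_self _ _
      · -- injective
        rintro ⟨w₁, P₁, Q₁⟩ ha₁ ⟨w₂, P₂, Q₂⟩ ha₂ heq
        obtain ⟨⟨hd11, hd12⟩, hP1, hQ1⟩ := (hTmem _).mp ha₁
        obtain ⟨⟨hd21, hd22⟩, hP2, hQ2⟩ := (hTmem _).mp ha₂
        obtain ⟨hD1path, hD1not⟩ :=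
          CycDecomp.triple_path hconn hh hbig hxy hd11 hd12 P₁ Q₁ hP1 hQ1
        obtain ⟨hD2path, hD2not⟩ :=
          CycDecomp.triple_path hconn hh hbig hxy hd21 hd22 P₂ Q₂ hP2 hQ2
        have hED : (P₁.append Q₁.reverse).edges.toFinset
            = (P₂.append Q₂.reverse).edges.toFinset := by
          have h1 := congrArg (Finset.erase · s(x, y)) heq
          simp only [Finset.erase_insert_eq_erase] at h1
          rwa [Finset.erase_eq_self.mpr (by simpa using hD1not),
            Finset.erase_eq_self.mpr (by simpa using hD2not)] at h1
        have hD : P₁.append Q₁.reverse = P₂.append Q₂.reverse :=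
          CycDecomp.path_eq_of_edges_toFinset_eq _ _ hD1path hD2path hED
        obtain ⟨rfl, hPP, hQQ⟩ := CycDecomp.append_inj h P₁ P₂ Q₁.reverse Q₂.reverse hP1 hP2 hD
        have hPeq : P₁ = P₂ := eq_of_heq hPP
        have hQeq : Q₁ = Q₂ := by
          have := congrArg SimpleGraph.Walk.reverse (eq_of_heq hQQ)
          simpa [SimpleGraph.Walk.reverse_reverse] using this
        rw [hPeq, hQeq]
      · -- surjective
        intro s hs
        rw [Finset.mem_filter, Set.mem_toFinset] at hs
        obtain ⟨⟨v, cw, hcyc, hclen, hcedges⟩, hes⟩ := hs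
        have hec : s(x, y) ∈ cw.edges := by
          rw [← List.mem_toFinset, hcedges]; exact hes
        obtain ⟨D, hDpath, hDlen, hDnot, hDins⟩ := CycDecomp.cycle_split hxy cw hcyc hec
        have hD2h : D.length = 2 * h := by rw [hclen] at hDlen; omega
        obtain ⟨z, P, R, hsplit, hPlen⟩ := CycDecomp.exists_split D h (by omega)
        have hRlen : R.length = h := by
          have := congrArg SimpleGraph.Walk.length hsplit
          rw [SimpleGraph.Walk.length_append] at this
          omega
        obtain ⟨hdx, hdy⟩ := CycDecomp.mid_dist hconn hh hbig hxy P R hPlen hRlen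
        refine ⟨⟨z, (P, R.reverse)⟩, (hTmem _).mpr ⟨⟨hdx, hdy⟩, hPlen, ?_⟩, ?_⟩
        · rw [SimpleGraph.Walk.length_reverse]; exact hRlen
        · show insert s(x, y) ((P.append R.reverse.reverse).edges.toFinset) = s
          rw [SimpleGraph.Walk.reverse_reverse, ← hsplit, hDins, hcedges]
    -- count the triples
    have hTcard : Tfin.card = N := by
      rw [hTdef, Finset.card_sigma]
      have hterm : ∀ w ∈ Wfin,
          ((G.finsetWalkLength h x w) ×ˢ (G.finsetWalkLength h y w)).card = p * p := by
        intro w hw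
        obtain ⟨hd1, hd2⟩ := (hWmem w).mp hw
        rw [Finset.card_product, hgeo h le_rfl x w hd1, hgeo h le_rfl y w hd2]
      rw [Finset.sum_congr rfl hterm, Finset.sum_const, hWcard, smul_eq_mul, hNdef]
      ring
    rw [hSconv, Set.ncard_coe_finset, hbij, hTcard]
  -- positivity of the count
  have hNpos : ∀ x y : V, G.Adj x y → 0 < N := by
    intro x y hxy
    have hWpos : ({w : V | G.dist x w = h ∧ G.dist y w = h}).Nonempty := by
      rw [← Set.ncard_pos (Set.toFinite _), hq' x y hxy]
      exact hq
    obtain ⟨w, hdx, hdy⟩ := hWpos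
    obtain ⟨g, hg1⟩ := (hconn x w).exists_walk_length_eq_dist
    have hppos : 0 < p := by
      rw [hpdef, ← hgeo h le_rfl x w hdx]
      apply Finset.card_pos.mpr
      exact ⟨g, SimpleGraph.mem_finsetWalkLength_iff.mpr (by rw [hg1, hdx])⟩
    rw [hNdef]
    positivity
  have part1 : ∀ e ∈ G.edgeSet,
      ({s ∈ cycleEdgeSets G (2 * h + 1) | e ∈ s}).ncard = N := by
    intro e he
    induction e using Sym2.ind with
    | _ x y => exact key x y (G.mem_edgeSet.mp he)
  refine ⟨part1, ?_, ?_⟩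
  · intro e he
    induction e using Sym2.ind with
    | _ x y =>
      rw [part1 _ he]
      have hNe : (N : ℝ) ≠ 0 := by
        have := hNpos x y (G.mem_edgeSet.mp he)
        positivity
      rw [mul_one_div]
      exact div_self hNe
  · -- homogeneity
    set Cyc : Finset (Finset (Sym2 V)) := Set.toFinset (cycleEdgeSets G (2 * h + 1)) with hCyc
    -- double counting
    have hdc : ∀ v : V,
        2 * (Cyc.filter (fun s => ∃ e ∈ s, v ∈ e)).card = G.degree v * N := by
      intro v
      have hstep1 : ∀ e ∈ G.incidenceFinset v, (Cyc.filter (fun s => e ∈ s)).card = N := by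
        intro e hei
        rw [SimpleGraph.mem_incidenceFinset] at hei
        have heE : e ∈ G.edgeSet := hei.1
        have hconv : {s ∈ cycleEdgeSets G (2 * h + 1) | e ∈ s}
            = ↑(Cyc.filter (fun s => e ∈ s)) := by
          ext s
          simp [hCyc, Set.mem_toFinset]
        have := part1 e heE
        rwa [hconv, Set.ncard_coe_finset] at this
      have hsum1 : ∑ e ∈ G.incidenceFinset v, (Cyc.filter (fun s => e ∈ s)).card
          = G.degree v * N := by
        rw [Finset.sum_congr rfl hstep1, Finset.sum_const, smul_eq_mul,
          SimpleGraph.card_incidenceFinset_eq_degree]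
      have hsum2 : ∑ e ∈ G.incidenceFinset v, (Cyc.filter (fun s => e ∈ s)).card
          = 2 * (Cyc.filter (fun s => ∃ e ∈ s, v ∈ e)).card := by
        have hswap : ∑ e ∈ G.incidenceFinset v, (Cyc.filter (fun s => e ∈ s)).card
            = ∑ s ∈ Cyc, ((G.incidenceFinset v).filter (fun e => e ∈ s)).card := by
          simp only [Finset.card_filter]
          rw [Finset.sum_comm]
        rw [hswap]
        have hterm : ∀ s ∈ Cyc, ((G.incidenceFinset v).filter (fun e => e ∈ s)).card
            = if (∃ e ∈ s, v ∈ e) then 2 else 0 := by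
          intro s hsmem
          rw [hCyc, Set.mem_toFinset] at hsmem
          obtain ⟨u', cw, hcyc, hclen, hcedges⟩ := hsmem
          have hIfil : (G.incidenceFinset v).filter (fun e => e ∈ s)
              = s.filter (fun e => v ∈ e) := by
            ext e
            simp only [Finset.mem_filter, SimpleGraph.mem_incidenceFinset,
              SimpleGraph.incidenceSet, Set.mem_sep_iff]
            constructor
            · rintro ⟨hi, hm⟩
              exact ⟨hm, hi.2⟩
            · rintro ⟨hm, hv⟩
              refine ⟨⟨?_, hv⟩, hm⟩
              have : e ∈ cw.edges := by rw [← List.mem_toFinset, hcedges]; exact hm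
              exact cw.edges_subset_edgeSet this
          rw [hIfil]
          by_cases hex : ∃ e ∈ s, v ∈ e
          · rw [if_pos hex]
            obtain ⟨e, hes, hve⟩ := hex
            have : ∃ e ∈ cw.edges, v ∈ e := by
              refine ⟨e, ?_, hve⟩
              rw [← List.mem_toFinset, hcedges]; exact hes
            rw [← hcedges]
            exact CycDecomp.cycle_vertex_edges cw hcyc this
          · rw [if_neg hex]
            rw [Finset.card_eq_zero, Finset.eq_empty_iff_forall_notMem]
            intro e hmem
            rw [Finset.mem_filter] at hmem
            exact hex ⟨e, hmem.1, hmem.2⟩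
        rw [Finset.sum_congr rfl hterm, Finset.sum_ite, Finset.sum_const,
          Finset.sum_const_zero, smul_eq_mul, add_zero, mul_comm]
      omega
    have hdeg : ∀ v v' : V, G.degree v = G.degree v' := by
      intro v v'
      have hr := hreg 1 1 v v v' v' (by rw [SimpleGraph.dist_self, SimpleGraph.dist_self])
      have hset : ∀ u : V, {w : V | G.dist u w = 1 ∧ G.dist u w = 1}
          = ↑(G.neighborFinset u) := by
        intro u
        ext w
        simp only [Set.mem_setOf_eq, and_self, Finset.coe_sort_coe, Finset.mem_coe,
          SimpleGraph.mem_neighborFinset]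
        exact SimpleGraph.dist_eq_one_iff_adj
      rw [hset v, hset v', Set.ncard_coe_finset, Set.ncard_coe_finset] at hr
      rwa [SimpleGraph.card_neighborFinset_eq_degree, SimpleGraph.card_neighborFinset_eq_degree]
        at hr
    rcases isEmpty_or_nonempty V with hV | hV
    · exact ⟨0, fun v => isEmptyElim v⟩
    · obtain ⟨v₀⟩ := hV
      refine ⟨(Cyc.filter (fun s => ∃ e ∈ s, v₀ ∈ e)).card, fun v => ?_⟩
      have hconv : {s ∈ cycleEdgeSets G (2 * h + 1) | ∃ e ∈ s, v ∈ e}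
          = ↑(Cyc.filter (fun s => ∃ e ∈ s, v ∈ e)) := by
        ext s
        simp [hCyc, Set.mem_toFinset]
      rw [hconv, Set.ncard_coe_finset]
      have h1 := hdc v
      have h2 := hdc v₀
      rw [hdeg v v₀] at h1
      omega
end

section
/- For the line graph G of the Petersen graph (which is 4-regular of odd girth 3, decomposable homogeneously into triangles with weight α and pentagons with weight 1−α for any 0 ≤ α ≤ 1), the main theorem gives δ(G) ≥ 3 − √5 + α(√5 − 1); taking α = 1 yields δ(G) ≥ 2, and this is attained: λ_min(G) = −2. -/
open Real

theorem adjHermitian {V : Type*} [Fintype V] [DecidableEq V] (G : SimpleGraph V)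
    [DecidableRel G.Adj] : (G.adjMatrix ℝ).IsHermitian := by
  ext i j
  simp [Matrix.conjTranspose_apply, SimpleGraph.adj_comm]

noncomputable def lmin {V : Type*} [Finite V] (G : SimpleGraph V) : ℝ :=
  letI := Fintype.ofFinite V
  letI := Classical.decEq V
  letI := Classical.decRel G.Adj
  ⨅ i, (adjHermitian G).eigenvalues i

noncomputable def lmax {V : Type*} [Finite V] (G : SimpleGraph V) : ℝ :=
  letI := Fintype.ofFinite V
  letI := Classical.decEq V
  letI := Classical.decRel G.Adj
  ⨆ i, (adjHermitian G).eigenvalues i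

/-- The Petersen graph: vertices are the 2-element subsets of a 5-element set,
adjacent when disjoint. -/
def petersenGraph : SimpleGraph {s : Finset (Fin 5) // s.card = 2} :=
  SimpleGraph.fromRel (fun a b => Disjoint a.1 b.1)

section Aux
open Matrix

variable {V : Type*} [Fintype V] [DecidableEq V]

/-- vertex-edge incidence matrix -/
def incB (H : SimpleGraph V) : Matrix V H.edgeSet ℝ :=
  fun w e => if w ∈ (e : Sym2 V) then 1 else 0

lemma card_two (H : SimpleGraph V) (e : H.edgeSet) :
    (Finset.univ.filter (fun w => w ∈ (e:Sym2 V) ∧ w ∈ (e:Sym2 V))).card = 2 := by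
  obtain ⟨s, hs⟩ := e
  induction s using Sym2.ind with
  | _ a b =>
    have hab : a ≠ b := (H.mem_edgeSet.mp hs).ne
    have hfil : Finset.univ.filter (fun w => w ∈ (s(a,b):Sym2 V) ∧ w ∈ (s(a,b):Sym2 V)) = {a,b} := by
      ext w; simp [Sym2.mem_iff]
    rw [show ((⟨s(a,b),hs⟩ : H.edgeSet) : Sym2 V) = s(a,b) from rfl, hfil,
      Finset.card_insert_of_notMem (by simp [hab]), Finset.card_singleton]

lemma incB_mul (H : SimpleGraph V) [DecidableRel H.lineGraph.Adj] [DecidableEq H.edgeSet] :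
    (incB H)ᵀ * incB H = (H.lineGraph).adjMatrix ℝ + (2:ℝ) • 1 := by
  ext e f
  rw [Matrix.mul_apply]
  have hterm : ∀ w, (incB H)ᵀ e w * incB H w f
      = if w ∈ (e : Sym2 V) ∧ w ∈ (f : Sym2 V) then (1:ℝ) else 0 := by
    intro w
    by_cases h1 : w ∈ (e : Sym2 V) <;> by_cases h2 : w ∈ (f : Sym2 V) <;>
      simp [incB, Matrix.transpose_apply, h1, h2]
  rw [Finset.sum_congr rfl fun w _ => hterm w, Finset.sum_boole,
    Matrix.add_apply, SimpleGraph.adjMatrix_apply, Matrix.smul_apply, Matrix.one_apply]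
  by_cases hef : e = f
  · subst hef
    rw [card_two H e, if_neg (H.lineGraph.irrefl), if_pos rfl]
    norm_num
  · by_cases hv : ∃ v, v ∈ (e : Sym2 V) ∧ v ∈ (f : Sym2 V)
    · obtain ⟨v, hv1, hv2⟩ := hv
      have hadj : H.lineGraph.Adj e f := SimpleGraph.lineGraph_adj_iff_exists.mpr ⟨hef, v, hv1, hv2⟩
      have hfil : Finset.univ.filter (fun w => w ∈ (e : Sym2 V) ∧ w ∈ (f : Sym2 V)) = {v} := by
        ext w
        simp only [Finset.mem_filter, Finset.mem_univ, true_and, Finset.mem_singleton]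
        constructor
        · rintro ⟨hw1, hw2⟩
          by_contra hwv
          exact hef (Subtype.ext (Sym2.eq_of_ne_mem hwv hw1 hv1 hw2 hv2))
        · rintro rfl; exact ⟨hv1, hv2⟩
      rw [hfil, if_pos hadj, if_neg hef]
      simp
    · have hadj : ¬ H.lineGraph.Adj e f := by
        rw [SimpleGraph.lineGraph_adj_iff_exists]
        rintro ⟨-, w, hw1, hw2⟩
        exact hv ⟨w, hw1, hw2⟩
      have hfil : Finset.univ.filter (fun w => w ∈ (e : Sym2 V) ∧ w ∈ (f : Sym2 V)) = ∅ := by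
        ext w; simp only [Finset.mem_filter, Finset.mem_univ, true_and, Finset.notMem_empty, iff_false]
        rintro ⟨hw1, hw2⟩
        exact hv ⟨w, hw1, hw2⟩
      rw [hfil, if_neg hadj, if_neg hef]
      simp


lemma eigenvalue_min_eq {V : Type*} [Fintype V] [DecidableEq V] (G : SimpleGraph V)
    [DecidableRel G.Adj] {W : Type*} [Fintype W] (B : Matrix W V ℝ)
    (hB : Bᵀ * B = G.adjMatrix ℝ + (2:ℝ) • 1)
    (hcard : Fintype.card W < Fintype.card V) :
    (⨅ i, (adjHermitian G).eigenvalues i) = -2 := by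
  set A := G.adjMatrix ℝ with hA_def
  set hA := adjHermitian G with hA'
  haveI : Nonempty V := Fintype.card_pos_iff.mp (by omega)
  -- Part 1: every eigenvalue is ≥ -2
  have part1 : ∀ i, -2 ≤ hA.eigenvalues i := by
    intro i
    set v : V → ℝ := (WithLp.equiv 2 _) (hA.eigenvectorBasis i) with hv_def
    have hv : A *ᵥ v = hA.eigenvalues i • v := hA.mulVec_eigenvectorBasis i
    have hv0 : v ≠ 0 := by
      intro h
      apply hA.eigenvectorBasis.orthonormal.ne_zero i
      exact (WithLp.equiv 2 _).injective (by simpa [hv_def] using h)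
    have hvv_nonneg : 0 ≤ v ⬝ᵥ v :=
      Finset.sum_nonneg fun j _ => mul_self_nonneg _
    have hvv : 0 < v ⬝ᵥ v :=
      hvv_nonneg.lt_of_ne fun h => hv0 (dotProduct_self_eq_zero.mp h.symm)
    have h1 : v ⬝ᵥ ((Bᵀ * B) *ᵥ v) = (B *ᵥ v) ⬝ᵥ (B *ᵥ v) := by
      rw [← Matrix.mulVec_mulVec, Matrix.dotProduct_mulVec, Matrix.vecMul_transpose]
    have h2 : v ⬝ᵥ ((Bᵀ * B) *ᵥ v) = (hA.eigenvalues i + 2) * (v ⬝ᵥ v) := by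
      rw [hB, Matrix.add_mulVec, hv, Matrix.smul_mulVec, Matrix.one_mulVec,
        dotProduct_add, dotProduct_smul, dotProduct_smul]
      simp only [smul_eq_mul]
      ring
    have h3 : 0 ≤ (B *ᵥ v) ⬝ᵥ (B *ᵥ v) :=
      Finset.sum_nonneg fun j _ => mul_self_nonneg _
    nlinarith [h1, h2, h3, hvv]
  -- Part 2: -2 is an eigenvalue
  have part2 : ∃ i, hA.eigenvalues i = -2 := by
    have hni : ¬ Function.Injective (Matrix.mulVecLin B) := by
      intro h
      have hle := LinearMap.finrank_le_finrank_of_injective h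
      rw [Module.finrank_pi, Module.finrank_pi] at hle
      omega
    obtain ⟨x, y, hxy, hne⟩ := Function.not_injective_iff.mp hni
    set u : V → ℝ := x - y with hu_def
    have hu0 : u ≠ 0 := sub_ne_zero.mpr hne
    have hBu : B *ᵥ u = 0 := by
      have : Matrix.mulVecLin B (x - y) = 0 := by
        rw [map_sub, hxy, sub_self]
      simpa [Matrix.mulVecLin] using this
    have hdet : (Bᵀ * B).det = 0 := by
      refine Matrix.exists_mulVec_eq_zero_iff.mp ⟨u, hu0, ?_⟩
      rw [← Matrix.mulVec_mulVec, hBu, Matrix.mulVec_zero]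
    -- relate det (A + 2•1) to eigenvalues
    have hsp := hA.spectral_theorem
    set U : Matrix V V ℝ := (hA.eigenvectorUnitary : Matrix V V ℝ) with hU
    have hU1 : U * star U = 1 := hA.eigenvectorUnitary.prop.2
    have hU2 : star U * U = 1 := hA.eigenvectorUnitary.prop.1
    have hAd : A + (2:ℝ) • 1 = U * (Matrix.diagonal (fun i => hA.eigenvalues i + 2)) * star U := by
      have h21 : (2:ℝ) • (1 : Matrix V V ℝ) = U * ((2:ℝ) • 1) * star U := by
        rw [Matrix.mul_smul, Matrix.mul_one, Matrix.smul_mul, hU1]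
      have hdiag : Matrix.diagonal (RCLike.ofReal ∘ hA.eigenvalues) + (2:ℝ) • (1 : Matrix V V ℝ)
          = Matrix.diagonal (fun i => hA.eigenvalues i + 2) := by
        ext j k
        rcases eq_or_ne j k with rfl | h
        · simp [Matrix.one_apply]
        · simp [Matrix.diagonal_apply_ne _ h, Matrix.one_apply_ne h]
      calc A + (2:ℝ) • 1
          = U * Matrix.diagonal (RCLike.ofReal ∘ hA.eigenvalues) * star U + U * ((2:ℝ) • 1) * star U := by
            rw [Unitary.conjStarAlgAut_apply] at hsp
            rw [← h21, ← hsp]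
        _ = U * (Matrix.diagonal (RCLike.ofReal ∘ hA.eigenvalues) + (2:ℝ) • 1) * star U := by
            rw [Matrix.mul_add, Matrix.add_mul]
        _ = U * (Matrix.diagonal (fun i => hA.eigenvalues i + 2)) * star U := by rw [hdiag]
    have hdet2 : (A + (2:ℝ) • 1).det = ∏ i, (hA.eigenvalues i + 2) := by
      rw [hAd, Matrix.det_mul, Matrix.det_mul, mul_comm, ← mul_assoc, ← Matrix.det_mul, hU2,
        Matrix.det_one, one_mul, Matrix.det_diagonal]
    rw [← hB, hdet] at hdet2
    obtain ⟨i, -, hi⟩ := Finset.prod_eq_zero_iff.mp hdet2.symm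
    exact ⟨i, by linarith⟩
  obtain ⟨i0, hi0⟩ := part2
  refine le_antisymm ?_ (le_ciInf part1)
  calc ⨅ i, hA.eigenvalues i ≤ hA.eigenvalues i0 :=
        ciInf_le ⟨-2, by rintro x ⟨i, rfl⟩; exact part1 i⟩ i0
    _ = -2 := hi0

instance : DecidableRel petersenGraph.Adj :=
  fun _ _ => inferInstanceAs (Decidable (_ ≠ _ ∧ (_ ∨ _)))

set_option maxRecDepth 100000 in
lemma petersen_card_edges : Fintype.card petersenGraph.edgeSet = 15 := by decide

set_option maxRecDepth 100000 in
lemma petersen_card_verts : Fintype.card {s : Finset (Fin 5) // s.card = 2} = 10 := by decide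

lemma lmin_petersen : lmin petersenGraph.lineGraph = -2 := by
  unfold lmin
  letI instF : Fintype petersenGraph.edgeSet := Fintype.ofFinite _
  letI instE : DecidableEq petersenGraph.edgeSet := Classical.decEq _
  letI instR : DecidableRel petersenGraph.lineGraph.Adj := Classical.decRel _
  refine @eigenvalue_min_eq _ instF instE petersenGraph.lineGraph instR _ _
    (incB petersenGraph) (@incB_mul _ _ _ petersenGraph instR instE) ?_
  have h15 : @Fintype.card _ (Fintype.ofFinite petersenGraph.edgeSet) = 15 := by
    rw [Subsingleton.elim (Fintype.ofFinite _) petersenGraph.fintypeEdgeSet]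
    exact petersen_card_edges
  rw [h15, petersen_card_verts]
  omega

end Aux

theorem lineGraph_petersen_bound :
    (∀ α : ℝ, 0 ≤ α → α ≤ 1 →
      lmin petersenGraph.lineGraph + 4 ≥ 3 - Real.sqrt 5 + α * (Real.sqrt 5 - 1)) ∧
    lmin petersenGraph.lineGraph = -2 := by
  refine ⟨?_, lmin_petersen⟩
  intro α hα0 hα1
  rw [lmin_petersen]
  have h1 : (1:ℝ) ≤ Real.sqrt 5 := by
    rw [show (1:ℝ) = Real.sqrt 1 by simp]
    exact Real.sqrt_le_sqrt (by norm_num)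
  nlinarith [mul_nonneg (sub_nonneg.2 hα1) (sub_nonneg.2 h1),
    Real.sq_sqrt (by norm_num : (5:ℝ) ≥ 0), Real.sqrt_nonneg 5]
end
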